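/- arXiv:1702.03718 — 8 statements merged into one kernel-verified Lean document; each statement's English description precedes it below -/
import Mathlib

section
/- For all integers n ≥ 1 and k ≥ 1, the Roman harmonic numbers satisfy the recurrence c_n^{(k)} = c_n^{(k-1)}/n + c_{n-1}^{(k)}, i.e. n·c_n^{(k)} = c_n^{(k-1)} + n·c_{n-1}^{(k)}. -/
/-- Roman harmonic number `c_n^{(k)}` as a rational number. -/
def romanHarmonic (n k : ℕ) : ℚ :=
  ∑ j ∈ Finset.Icc 1 n, (-1 : ℚ) ^ (j - 1) * (n.choose j) / (j : ℚ) ^ k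

/-! The recurrence holds term by term: `n * C(n, j) = j * C(n, j) + n * C(n - 1, j)` (absorption,
`(n - j) * C(n, j) = n * C(n - 1, j)`), and the factor `j` lowers `j ^ k` to `j ^ (k - 1)`. The sum
for `c_{n-1}` may be taken over `1 ≤ j ≤ n` because `C(n - 1, n) = 0`. -/

open Finset

theorem Nat.mul_choose_eq_mul_choose_add_mul_choose_sub_one (n j : ℕ) :
    n * n.choose j = j * n.choose j + n * (n - 1).choose j := by
  cases n with
  | zero => cases j <;> simp
  | succ m =>
    rcases le_or_gt j (m + 1) with hj | hj
    · rw [Nat.add_sub_cancel, mul_comm (m + 1) (m.choose j), Nat.choose_mul_succ_eq,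
        mul_comm j, ← Nat.mul_add, Nat.add_sub_cancel' hj, mul_comm]
    · simp [Nat.choose_eq_zero_of_lt hj, Nat.choose_eq_zero_of_lt (Nat.lt_of_succ_lt hj)]

theorem romanHarmonic_eq_sum_Icc {n N : ℕ} (h : n ≤ N) (k : ℕ) :
    romanHarmonic n k = ∑ j ∈ Icc 1 N, (-1 : ℚ) ^ (j - 1) * (n.choose j) / (j : ℚ) ^ k := by
  refine sum_subset (Icc_subset_Icc_right h) fun j hjN hjn => ?_
  simp only [mem_Icc, not_and, not_le] at hjN hjn
  simp [Nat.choose_eq_zero_of_lt (hjn hjN.1)]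

theorem roman_harmonic_recurrence_general (n k : ℕ) (hk : 1 ≤ k) :
    (n : ℚ) * romanHarmonic n k =
      romanHarmonic n (k - 1) + (n : ℚ) * romanHarmonic (n - 1) k := by
  obtain ⟨k, rfl⟩ := Nat.exists_eq_add_of_le' hk
  rw [romanHarmonic_eq_sum_Icc (Nat.sub_le n 1), romanHarmonic, romanHarmonic, mul_sum, mul_sum,
    ← sum_add_distrib]
  refine sum_congr rfl fun j hj => ?_
  have hj : (j : ℚ) ≠ 0 := Nat.cast_ne_zero.2 (Nat.one_le_iff_ne_zero.1 (mem_Icc.1 hj).1)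
  have hchoose : (n * n.choose j : ℚ) = j * n.choose j + n * (n - 1).choose j :=
    mod_cast Nat.mul_choose_eq_mul_choose_add_mul_choose_sub_one n j
  rw [Nat.add_sub_cancel, pow_succ]
  field_simp
  linear_combination hchoose

theorem roman_harmonic_recurrence (n k : ℕ) (hn : 1 ≤ n) (hk : 1 ≤ k) :
    (n : ℚ) * romanHarmonic n k =
      romanHarmonic n (k - 1) + (n : ℚ) * romanHarmonic (n - 1) k :=
  roman_harmonic_recurrence_general n k hk
end

section
/- For all integers n ≥ 1 and k ≥ 1, c_n^{(k)} = Σ_{j=1}^{n} c_j^{(k-1)}/j. -/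
open Finset

theorem romanHarmonic_eq_sum_range (n k : ℕ) :
    romanHarmonic n k = ∑ i ∈ range n, (-1 : ℚ) ^ i * n.choose (i + 1) / ((i : ℚ) + 1) ^ k := by
  rw [romanHarmonic, ← Ico_add_one_right_eq_Icc, sum_Ico_eq_sum_range, add_tsub_cancel_right]
  simp only [add_comm 1, add_tsub_cancel_right]
  push_cast
  rfl

theorem cast_choose_div_succ (n i : ℕ) :
    (n.choose i : ℚ) / (i + 1) = (n + 1).choose (i + 1) / (n + 1) := by
  rw [div_eq_div_iff (by positivity) (by positivity)]
  exact_mod_cast (mul_comm _ _).trans (Nat.add_one_mul_choose_eq n i)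

theorem romanHarmonic_succ_succ (n k : ℕ) :
    romanHarmonic (n + 1) (k + 1) = romanHarmonic n (k + 1) + romanHarmonic (n + 1) k / (n + 1) := by
  have extend : romanHarmonic n (k + 1)
      = ∑ i ∈ range (n + 1), (-1 : ℚ) ^ i * n.choose (i + 1) / ((i : ℚ) + 1) ^ (k + 1) := by
    rw [romanHarmonic_eq_sum_range, sum_range_succ, Nat.choose_succ_self]
    simp
  rw [extend, romanHarmonic_eq_sum_range, romanHarmonic_eq_sum_range, sum_div,
    ← sum_add_distrib]
  refine sum_congr rfl fun i _ => ?_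
  have pascal : ((n + 1).choose (i + 1) : ℚ) = n.choose i + n.choose (i + 1) := by
    exact_mod_cast Nat.choose_succ_succ' n i
  have shift := cast_choose_div_succ n i
  -- keep `i + 1` atomic, otherwise `ring` expands its powers and cannot match the inverses
  generalize ((i : ℚ) + 1) = a at shift ⊢
  linear_combination (-1 : ℚ) ^ i / a ^ (k + 1) * pascal + (-1 : ℚ) ^ i / a ^ k * shift

theorem roman_harmonic_nested_sum_general (n k : ℕ) (hk : 1 ≤ k) :
    romanHarmonic n k = ∑ j ∈ Finset.Icc 1 n, romanHarmonic j (k - 1) / (j : ℚ) := by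
  obtain ⟨k, rfl⟩ := Nat.exists_eq_add_of_le' hk
  induction n with
  | zero => simp [romanHarmonic]
  | succ n ih =>
    rw [romanHarmonic_succ_succ, ih, sum_Icc_succ_top (by omega)]
    push_cast
    rfl

theorem roman_harmonic_nested_sum (n k : ℕ) (hn : 1 ≤ n) (hk : 1 ≤ k) :
    romanHarmonic n k = ∑ j ∈ Finset.Icc 1 n, romanHarmonic j (k - 1) / (j : ℚ) :=
  roman_harmonic_nested_sum_general n k hk
end

section
/- For all n ≥ 1 and k ≥ 0, ∫_0^1 x^{n-1} (ln(1-x))^k dx = ((-1)^k k!/n) · Σ_{l=1}^{n} C(n,l) (-1)^{l-1} / l^k. -/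
/-!
Substituting `x ↦ 1 - x` and expanding `(1 - x) ^ (n - 1)` binomially reduces the integral to
the moments `∫₀¹ x ^ j * log x ^ k`. The substitution `x = exp (-t)` turns these into Gamma
integrals, equal to `(-1) ^ k * k ! / (j + 1) ^ (k + 1)`, and the identity
`n * (n - 1).choose j = (j + 1) * n.choose (j + 1)` brings the sum into the stated form.
-/

open MeasureTheory Real Set
open scoped Nat

theorem image_exp_neg_Ioi_zero : (fun t : ℝ ↦ exp (-t)) '' Ioi 0 = Ioo 0 1 := by
  rw [show (fun t : ℝ ↦ exp (-t)) = exp ∘ Neg.neg from rfl, image_comp, image_neg_Ioi, neg_zero,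
    image_exp_Iio, exp_zero]

theorem hasDerivWithinAt_exp_neg (t : ℝ) (s : Set ℝ) :
    HasDerivWithinAt (fun t : ℝ ↦ exp (-t)) (-exp (-t)) s t := by
  simpa using (hasDerivAt_neg t).exp.hasDerivWithinAt

section SubstitutionExpNeg

variable {E : Type*} [NormedAddCommGroup E] [NormedSpace ℝ E]

theorem integrableOn_Ioo_zero_one_iff_comp_exp_neg (g : ℝ → E) :
    IntegrableOn g (Ioo 0 1) ↔ IntegrableOn (fun t ↦ exp (-t) • g (exp (-t))) (Ioi 0) := by
  rw [← image_exp_neg_Ioi_zero, integrableOn_image_iff_integrableOn_abs_deriv_smul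
    measurableSet_Ioi (fun t _ ↦ hasDerivWithinAt_exp_neg t _) (fun x _ y _ h ↦ by simpa using h)]
  simp [abs_of_pos (exp_pos _)]

theorem integral_Ioo_zero_one_eq_integral_comp_exp_neg (g : ℝ → E) :
    ∫ x in Ioo 0 1, g x = ∫ t in Ioi 0, exp (-t) • g (exp (-t)) := by
  rw [← image_exp_neg_Ioi_zero, integral_image_eq_integral_abs_deriv_smul measurableSet_Ioi
    (fun t _ ↦ hasDerivWithinAt_exp_neg t _) (fun x _ y _ h ↦ by simpa using h)]
  simp [abs_of_pos (exp_pos _)]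

end SubstitutionExpNeg

theorem exp_neg_mul_rpow_mul_log_pow_comp_exp_neg (s t : ℝ) (k : ℕ) :
    exp (-t) * (exp (-t) ^ s * log (exp (-t)) ^ k) =
      (-1) ^ k * (t ^ k * exp (-((s + 1) * t))) := by
  rw [log_exp, ← exp_mul, ← mul_assoc, ← exp_add, neg_pow]
  ring_nf

theorem integrableOn_rpow_mul_log_pow {s : ℝ} (hs : -1 < s) (k : ℕ) :
    IntegrableOn (fun x ↦ x ^ s * log x ^ k) (Ioo 0 1) := by
  rw [integrableOn_Ioo_zero_one_iff_comp_exp_neg]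
  simp_rw [smul_eq_mul, exp_neg_mul_rpow_mul_log_pow_comp_exp_neg]
  refine Integrable.const_mul ?_ _
  have := integrableOn_rpow_mul_exp_neg_mul_rpow (p := 1) (s := k) (b := s + 1)
    (by linarith [k.cast_nonneg (α := ℝ)]) one_pos (by linarith)
  refine this.congr_fun (fun t _ ↦ ?_) measurableSet_Ioi
  simp only [rpow_natCast, rpow_one, neg_mul]

theorem intervalIntegrable_rpow_mul_log_pow {s : ℝ} (hs : -1 < s) (k : ℕ) :
    IntervalIntegrable (fun x ↦ x ^ s * log x ^ k) volume 0 1 :=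
  (intervalIntegrable_iff_integrableOn_Ioo_of_le zero_le_one).2
    (integrableOn_rpow_mul_log_pow hs k)

theorem integral_rpow_mul_log_pow {s : ℝ} (hs : -1 < s) (k : ℕ) :
    ∫ x in 0..1, x ^ s * log x ^ k = (-1) ^ k * k ! / (s + 1) ^ (k + 1) := by
  rw [intervalIntegral.integral_of_le zero_le_one, integral_Ioc_eq_integral_Ioo,
    integral_Ioo_zero_one_eq_integral_comp_exp_neg]
  simp_rw [smul_eq_mul, exp_neg_mul_rpow_mul_log_pow_comp_exp_neg]
  have hGamma := integral_rpow_mul_exp_neg_mul_Ioi (a := k + 1) (r := s + 1)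
    (by positivity) (by linarith)
  rw [add_sub_cancel_right, Gamma_nat_eq_factorial, ← Nat.cast_add_one, rpow_natCast] at hGamma
  simp_rw [rpow_natCast] at hGamma
  rw [integral_const_mul, hGamma, one_div_pow]
  ring

theorem one_sub_pow_eq_sum {R : Type*} [CommRing R] (x : R) (m : ℕ) :
    (1 - x) ^ m = ∑ j ∈ Finset.range (m + 1), (m.choose j * (-1) ^ j : R) * x ^ j := by
  rw [sub_eq_neg_add, add_pow]
  refine Finset.sum_congr rfl fun j _ ↦ ?_
  rw [neg_pow]
  ring

open Finset in
theorem sum_range_choose_mul_neg_one_pow_div (m k : ℕ) :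
    ∑ j ∈ range (m + 1), (m.choose j : ℝ) * (-1) ^ j / ((j : ℝ) + 1) ^ (k + 1) =
      1 / (m + 1) *
        ∑ l ∈ Icc 1 (m + 1), ((m + 1).choose l : ℝ) * (-1) ^ (l - 1) / (l : ℝ) ^ k := by
  have shift (f : ℕ → ℝ) : ∑ l ∈ Icc 1 (m + 1), f l = ∑ j ∈ range (m + 1), f (j + 1) := by
    rw [range_eq_Ico, sum_Ico_add', zero_add, Finset.Ico_add_one_right_eq_Icc]
  rw [shift, mul_sum]
  refine sum_congr rfl fun j _ ↦ ?_
  have hchoose : ((m + 1).choose (j + 1) : ℝ) * (j + 1) = (m + 1) * m.choose j := by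
    exact_mod_cast (Nat.add_one_mul_choose_eq m j).symm
  rw [Nat.add_sub_cancel, Nat.cast_add_one]
  field_simp
  linear_combination (-((j : ℝ) + 1) ^ k) * hchoose

theorem integral_pow_mul_log_pow (n k : ℕ) (hn : 1 ≤ n) :
    (∫ x in (0:ℝ)..1, x ^ (n - 1) * (Real.log (1 - x)) ^ k) =
      ((-1 : ℝ) ^ k * (Nat.factorial k : ℝ) / (n : ℝ)) *
        ∑ l ∈ Finset.Icc 1 n, (n.choose l : ℝ) * (-1 : ℝ) ^ (l - 1) / (l : ℝ) ^ k := by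
  obtain ⟨m, rfl⟩ := Nat.exists_eq_add_of_le' hn
  have hj (j : ℕ) : -1 < (j : ℝ) := neg_one_lt_zero.trans_le j.cast_nonneg
  have hintegrable (j : ℕ) : IntervalIntegrable (fun x : ℝ ↦ x ^ j * log x ^ k) volume 0 1 := by
    simpa only [rpow_natCast] using intervalIntegrable_rpow_mul_log_pow (hj j) k
  have hmoment (j : ℕ) :
      ∫ x in (0:ℝ)..1, x ^ j * log x ^ k = (-1) ^ k * k ! / ((j : ℝ) + 1) ^ (k + 1) := by
    simpa only [rpow_natCast] using integral_rpow_mul_log_pow (hj j) k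
  have hbinom (x : ℝ) : (1 - x) ^ m * log x ^ k =
      ∑ j ∈ Finset.range (m + 1), (m.choose j * (-1) ^ j : ℝ) * (x ^ j * log x ^ k) := by
    simp_rw [one_sub_pow_eq_sum, Finset.sum_mul, mul_assoc]
  calc ∫ x in (0:ℝ)..1, x ^ (m + 1 - 1) * log (1 - x) ^ k
      = ∫ x in (0:ℝ)..1, (1 - x) ^ m * log x ^ k := by
        simpa using intervalIntegral.integral_comp_sub_left
          (fun x : ℝ ↦ (1 - x) ^ m * log x ^ k) 1 (a := 0) (b := 1)
    _ = ∑ j ∈ Finset.range (m + 1),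
          (m.choose j * (-1) ^ j : ℝ) * ((-1) ^ k * k ! / ((j : ℝ) + 1) ^ (k + 1)) := by
        simp_rw [hbinom]
        rw [intervalIntegral.integral_finsetSum fun j _ ↦ (hintegrable j).const_mul _]
        simp_rw [intervalIntegral.integral_const_mul, hmoment]
    _ = (-1) ^ k * k ! *
          ∑ j ∈ Finset.range (m + 1), (m.choose j : ℝ) * (-1) ^ j / ((j : ℝ) + 1) ^ (k + 1) := by
        rw [Finset.mul_sum]
        refine Finset.sum_congr rfl fun j _ ↦ ?_
        ring
    _ = _ := by
        rw [sum_range_choose_mul_neg_one_pow_div, Nat.cast_add_one]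
        ring
end

section
/- For all n ≥ 1 and k ≥ 0, Σ_{j=1}^{n} (-1)^{j-1} C(n,j) · c_j^{(k)} = 1/n^k. Equivalently, the sequences {c_{n+1}^{(k)}/(n+1)} and {1/(n+1)^{k+1}} are binomial transforms of each other. -/
open Finset fwdDiff

section BinomialTransform

variable {G : Type*} [AddCommGroup G]

def binomialTransform (a : ℕ → G) (n : ℕ) : G :=
  ∑ l ∈ range (n + 1), ((-1 : ℤ) ^ l * n.choose l) • a l

theorem binomialTransform_eq_smul_fwdDiff_iter (a : ℕ → G) (n : ℕ) :
    binomialTransform a n = (-1 : ℤ) ^ n • (Δ_[1])^[n] a 0 := by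
  rw [fwdDiff_iter_eq_sum_shift, smul_sum, binomialTransform]
  refine sum_congr rfl fun l _ => ?_
  have hsign : (-1 : ℤ) ^ l = (-1) ^ n * (-1) ^ (n - l) := by
    rw [← pow_add, show n + (n - l) = l + 2 * (n - l) by grind, pow_add, pow_mul]
    simp
  rw [smul_smul, hsign, mul_assoc, zero_add, smul_eq_mul, mul_one]

theorem binomialTransform_involutive :
    Function.Involutive (binomialTransform : (ℕ → G) → ℕ → G) := by
  intro a
  funext n
  calc binomialTransform (binomialTransform a) n
      = ∑ l ∈ range (n + 1), n.choose l • (Δ_[1])^[l] a 0 := by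
        refine sum_congr rfl fun l _ => ?_
        rw [binomialTransform_eq_smul_fwdDiff_iter, smul_smul, mul_right_comm, ← mul_pow]
        simp
    _ = a n := by rw [← shift_eq_sum_fwdDiff_iter, zero_add, smul_eq_mul, mul_one]

theorem binomialTransform_neg (a : ℕ → G) : binomialTransform (-a) = -binomialTransform a := by
  funext n
  simp [binomialTransform]

end BinomialTransform

theorem sum_Icc_neg_one_pow_choose_mul {R : Type*} [CommRing R] (a : ℕ → R) (n : ℕ) :
    ∑ j ∈ Icc 1 n, (-1 : R) ^ (j - 1) * n.choose j * a j = a 0 - binomialTransform a n := by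
  rw [binomialTransform, Nat.range_succ_eq_Icc_zero, ← insert_Icc_add_one_left_eq_Icc n.zero_le,
    sum_insert (by simp)]
  simp only [zero_add, pow_zero, Nat.choose_zero_right, Nat.cast_one, mul_one, one_smul,
    sub_add_cancel_left, ← sum_neg_distrib]
  refine sum_congr rfl fun j hj => ?_
  obtain ⟨i, rfl⟩ : ∃ i, j = i + 1 := ⟨j - 1, by grind⟩
  simp [pow_succ, zsmul_eq_mul]

-- The value at `0` must be `0`, not `1 / 0 ^ k`, which is `1` when `k = 0`.
theorem romanHarmonic_eq_neg_binomialTransform (n k : ℕ) :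
    romanHarmonic n k = -binomialTransform (fun i ↦ if i = 0 then 0 else 1 / (i : ℚ) ^ k) n := by
  set a : ℕ → ℚ := fun i ↦ if i = 0 then 0 else 1 / (i : ℚ) ^ k
  calc romanHarmonic n k = ∑ j ∈ Icc 1 n, (-1 : ℚ) ^ (j - 1) * n.choose j * a j :=
        sum_congr rfl fun j hj ↦ by simp [a, if_neg (by grind : j ≠ 0), div_eq_mul_inv]
    _ = -binomialTransform a n := by
      rw [sum_Icc_neg_one_pow_choose_mul, show a 0 = 0 from if_pos rfl, zero_sub]

theorem roman_harmonic_binomial_transform (n k : ℕ) (hn : 1 ≤ n) :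
    ∑ j ∈ Finset.Icc 1 n, (-1 : ℚ) ^ (j - 1) * (n.choose j) * romanHarmonic j k
      = 1 / (n : ℚ) ^ k := by
  have hc : (romanHarmonic · k) =
      -binomialTransform (fun i ↦ if i = 0 then 0 else 1 / (i : ℚ) ^ k) :=
    funext (romanHarmonic_eq_neg_binomialTransform · k)
  rw [sum_Icc_neg_one_pow_choose_mul (romanHarmonic · k), hc, binomialTransform_neg,
    binomialTransform_involutive, Pi.neg_apply, if_neg (by omega)]
  simp [romanHarmonic]
end

section
/- For all n ≥ 1 and k ≥ 1, Σ_{l=1}^{n} (-1)^l C(n,l) H_l^{(k)} = -(1/n) Σ_{j=1}^{n} (-1)^{j-1} C(n,j)/j^{k-1} = -c_n^{(k-1)}/n, where H_l^{(k)} = Σ_{j=1}^{l} 1/j^k. -/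
/-- Generalized harmonic number `H_l^{(k)}`. -/
def genHarmonic (l k : ℕ) : ℚ := ∑ j ∈ Finset.Icc 1 l, 1 / (j : ℚ) ^ k

/-- Partial alternating sum of binomial coefficients. -/
lemma partial_alt (n' m : ℕ) :
    ∑ l ∈ Finset.range (m + 1), (-1 : ℚ) ^ l * ((n' + 1).choose l)
      = (-1 : ℚ) ^ m * (n'.choose m) := by
  induction m with
  | zero => simp
  | succ m ih =>
    rw [Finset.sum_range_succ, ih, Nat.choose_succ_succ]
    push_cast
    ring

theorem binomial_transform_gen_harmonic (n k : ℕ) (hn : 1 ≤ n) (hk : 1 ≤ k) :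
    ∑ l ∈ Finset.Icc 1 n, (-1 : ℚ) ^ l * (n.choose l) * genHarmonic l k
      = -romanHarmonic n (k - 1) / (n : ℚ) := by
  obtain ⟨n', rfl⟩ : ∃ n', n = n' + 1 := ⟨n - 1, (Nat.succ_pred_eq_of_pos hn).symm⟩
  obtain ⟨k', rfl⟩ : ∃ k', k = k' + 1 := ⟨k - 1, (Nat.succ_pred_eq_of_pos hk).symm⟩
  simp only [genHarmonic, Finset.mul_sum]
  have hIcc : ∀ m : ℕ, Finset.Icc 1 m = Finset.Ico 1 (m + 1) := fun m => rfl
  calc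
    ∑ l ∈ Finset.Icc 1 (n' + 1), ∑ j ∈ Finset.Icc 1 l,
        (-1 : ℚ) ^ l * ((n' + 1).choose l) * (1 / (j : ℚ) ^ (k' + 1))
      = ∑ j ∈ Finset.Ico 1 (n' + 2), ∑ l ∈ Finset.Ico j (n' + 2),
          (-1 : ℚ) ^ l * ((n' + 1).choose l) * (1 / (j : ℚ) ^ (k' + 1)) := by
        rw [Finset.sum_Ico_Ico_comm 1 (n' + 2)
          (fun j l => (-1 : ℚ) ^ l * ((n' + 1).choose l) * (1 / (j : ℚ) ^ (k' + 1)))]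
        simp only [hIcc]
    _ = ∑ j ∈ Finset.Icc 1 (n' + 1),
          -((-1 : ℚ) ^ (j - 1) * (n'.choose (j - 1))) * (1 / (j : ℚ) ^ (k' + 1)) := by
        rw [← hIcc]
        refine Finset.sum_congr rfl fun j hj => ?_
        rw [← Finset.sum_mul]
        congr 1
        obtain ⟨hj1, hj2⟩ := Finset.mem_Icc.mp hj
        have h1 : ∑ l ∈ Finset.Ico j (n' + 2), (-1 : ℚ) ^ l * ((n' + 1).choose l)
            = (∑ l ∈ Finset.range (n' + 2), (-1 : ℚ) ^ l * ((n' + 1).choose l))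
              - ∑ l ∈ Finset.range j, (-1 : ℚ) ^ l * ((n' + 1).choose l) :=
          Finset.sum_Ico_eq_sub _ (by omega)
        obtain ⟨j', rfl⟩ : ∃ j', j = j' + 1 := ⟨j - 1, by omega⟩
        rw [h1, partial_alt, partial_alt, Nat.choose_succ_self]
        simp
    _ = -romanHarmonic (n' + 1) (k' + 1 - 1) / ((n' + 1 : ℕ) : ℚ) := by
        simp only [Nat.add_sub_cancel, romanHarmonic, neg_div, ← Finset.sum_div,
          ← Finset.sum_neg_distrib]
        rw [Finset.sum_div]
        refine Finset.sum_congr rfl fun j hj => ?_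
        obtain ⟨hj1, hj2⟩ := Finset.mem_Icc.mp hj
        obtain ⟨j', rfl⟩ : ∃ j', j = j' + 1 := ⟨j - 1, by omega⟩
        have key : ((n' + 1 : ℕ) : ℚ) * (n'.choose j') = ((n' + 1).choose (j' + 1)) * (j' + 1 : ℕ) := by
          exact_mod_cast congrArg (Nat.cast : ℕ → ℚ) (Nat.add_one_mul_choose_eq n' j')
        have hj0 : ((j' + 1 : ℕ) : ℚ) ≠ 0 := by positivity
        have hn0 : ((n' + 1 : ℕ) : ℚ) ≠ 0 := by positivity
        have hc : ((n'.choose j' : ℕ) : ℚ)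
            = ((n' + 1).choose (j' + 1)) * ((j' + 1 : ℕ) : ℚ) / ((n' + 1 : ℕ) : ℚ) := by
          rw [eq_div_iff hn0]; linarith [key]
        simp only [Nat.add_sub_cancel]
        rw [hc]
        field_simp
        ring
end

section
/- For all n ≥ 2, c_n^{(k)} is a strictly increasing sequence in k: c_n^{(k)} < c_n^{(k+1)} for all k ≥ 0. -/
lemma rh_range (m k : ℕ) :
    romanHarmonic m k
      = ∑ i ∈ Finset.range m, (-1 : ℚ) ^ i * (m.choose (i + 1)) / ((i : ℚ) + 1) ^ k := by
  unfold romanHarmonic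
  refine Finset.sum_nbij' (fun j => j - 1) (fun i => i + 1) ?_ ?_ ?_ ?_ ?_
  · intro j hj
    simp only [Finset.mem_Icc] at hj
    simp only [Finset.mem_range]
    omega
  · intro i hi
    simp only [Finset.mem_range] at hi
    simp only [Finset.mem_Icc]
    omega
  · intro j hj
    simp only [Finset.mem_Icc] at hj
    omega
  · intro i _
    omega
  · intro j hj
    simp only [Finset.mem_Icc] at hj
    have h1 : j - 1 + 1 = j := by omega
    rw [h1]
    have h2 : ((j - 1 : ℕ) : ℚ) + 1 = (j : ℚ) := by
      rw [Nat.cast_sub hj.1]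
      push_cast
      ring
    rw [h2]

lemma rh_one (k : ℕ) : romanHarmonic 1 k = 1 := by
  rw [rh_range]; simp

lemma rh_zero (m : ℕ) (hm : 1 ≤ m) : romanHarmonic m 0 = 1 := by
  rw [rh_range]
  have h0 : ((-1 : ℚ) + 1) ^ m = 0 := by
    simp [zero_pow (by omega : m ≠ 0)]
  rw [add_pow, Finset.sum_range_succ'] at h0
  simp only [pow_zero, one_pow, mul_one, Nat.choose_zero_right, Nat.cast_one, one_mul] at h0
  have h2 : ∑ i ∈ Finset.range m, (-1 : ℚ) ^ (i + 1) * (m.choose (i + 1))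
      = -∑ i ∈ Finset.range m, (-1 : ℚ) ^ i * (m.choose (i + 1)) := by
    rw [← Finset.sum_neg_distrib]
    refine Finset.sum_congr rfl fun i _ => ?_
    rw [pow_succ]; ring
  simp only [pow_zero, div_one]
  linarith [h2, h0]

lemma rh_rec (n k : ℕ) :
    romanHarmonic (n + 1) (k + 1)
      = romanHarmonic n (k + 1) + romanHarmonic (n + 1) k / ((n : ℚ) + 1) := by
  rw [rh_range, rh_range, rh_range]
  have hsplit : ∀ i ∈ Finset.range (n + 1),
      (-1 : ℚ) ^ i * ((n + 1).choose (i + 1)) / ((i : ℚ) + 1) ^ (k + 1)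
        = (-1 : ℚ) ^ i * (n.choose (i + 1)) / ((i : ℚ) + 1) ^ (k + 1)
          + (-1 : ℚ) ^ i * ((n + 1).choose (i + 1)) / ((i : ℚ) + 1) ^ k / ((n : ℚ) + 1) := by
    intro i _
    have hch : (n + 1) * n.choose i = (n + 1).choose (i + 1) * (i + 1) := by
      simpa using Nat.add_one_mul_choose_eq n i
    have hchQ : ((n : ℚ) + 1) * (n.choose i : ℚ)
        = ((n + 1).choose (i + 1) : ℚ) * ((i : ℚ) + 1) := by
      exact_mod_cast congrArg (Nat.cast : ℕ → ℚ) hch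
    have hpasc : ((n + 1).choose (i + 1) : ℚ) = (n.choose i : ℚ) + (n.choose (i + 1) : ℚ) := by
      rw [Nat.choose_succ_succ]; push_cast; ring
    have h2 : (-1 : ℚ) ^ i * (n.choose i : ℚ) / ((i : ℚ) + 1) ^ (k + 1)
        = (-1 : ℚ) ^ i * ((n + 1).choose (i + 1) : ℚ) / ((i : ℚ) + 1) ^ k / ((n : ℚ) + 1) := by
      rw [pow_succ, div_div]
      rw [div_eq_div_iff (by positivity) (by positivity)]
      linear_combination ((-1 : ℚ) ^ i * ((i : ℚ) + 1) ^ k) * hchQ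
    rw [← h2, hpasc]
    ring
  rw [Finset.sum_congr rfl hsplit, Finset.sum_add_distrib]
  congr 1
  · rw [Finset.sum_range_succ]
    simp [Nat.choose_eq_zero_of_lt (by omega : n < n + 1 + 1)]
  · rw [Finset.sum_div]

lemma rh_diff (k : ℕ) :
    ∀ n, 1 ≤ n → (0 ≤ romanHarmonic n (k + 1) - romanHarmonic n k ∧
      (2 ≤ n → 0 < romanHarmonic n (k + 1) - romanHarmonic n k)) := by
  induction k with
  | zero =>
    intro n hn
    induction n with
    | zero => omega
    | succ m ih =>
      by_cases hm0 : m = 0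
      · subst hm0
        refine ⟨by simp [rh_one], by omega⟩
      · have hm : 1 ≤ m := by omega
        obtain ⟨ih0, _⟩ := ih hm
        have hrec := rh_rec m 0
        have hz1 : romanHarmonic (m + 1) 0 = 1 := rh_zero _ (by omega)
        have hz0 : romanHarmonic m 0 = 1 := rh_zero _ hm
        have hpos : (0 : ℚ) < 1 / ((m : ℚ) + 1) := by positivity
        have key : romanHarmonic (m + 1) 1 - romanHarmonic (m + 1) 0
            = (romanHarmonic m 1 - romanHarmonic m 0) + 1 / ((m : ℚ) + 1) := by
          rw [hrec, hz1, hz0]; ring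
        exact ⟨by rw [key]; linarith, fun _ => by rw [key]; linarith⟩
  | succ k ihk =>
    intro n hn
    induction n with
    | zero => omega
    | succ m ih =>
      by_cases hm0 : m = 0
      · subst hm0
        refine ⟨by simp [rh_one], by omega⟩
      · have hm : 1 ≤ m := by omega
        obtain ⟨ih0, _⟩ := ih hm
        obtain ⟨_, ihkpos⟩ := ihk (m + 1) (by omega)
        have hkpos := ihkpos (by omega)
        have hrec1 := rh_rec m (k + 1)
        have hrec2 := rh_rec m k
        have hn1 : (0 : ℚ) < (m : ℚ) + 1 := by positivity
        have key : romanHarmonic (m + 1) (k + 1 + 1) - romanHarmonic (m + 1) (k + 1)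
            = (romanHarmonic m (k + 1 + 1) - romanHarmonic m (k + 1))
              + (romanHarmonic (m + 1) (k + 1) - romanHarmonic (m + 1) k) / ((m : ℚ) + 1) := by
          rw [hrec1, hrec2]; ring
        have hdivpos : 0 < (romanHarmonic (m + 1) (k + 1) - romanHarmonic (m + 1) k)
            / ((m : ℚ) + 1) := div_pos hkpos hn1
        exact ⟨by rw [key]; linarith, fun _ => by rw [key]; linarith⟩

theorem roman_harmonic_strict_mono (n : ℕ) (hn : 2 ≤ n) (k : ℕ) :
    romanHarmonic n k < romanHarmonic n (k + 1) := by
  obtain ⟨_, hpos⟩ := rh_diff k n (by omega)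
  linarith [hpos hn]
end

section
/- For all n ≥ 1 and k ≥ 0, 0 < c_n^{(k)} ≤ n, i.e. the Roman harmonic numbers of positive degree are positive and bounded by their degree. -/
open Finset

theorem Nat.cast_choose_succ_div {K : Type*} [Field K] [CharZero K] (n : ℕ) {j : ℕ} (hj : j ≠ 0) :
    ((n + 1).choose j : K) / j = n.choose j / j + (n + 1).choose j / (n + 1) := by
  obtain ⟨m, rfl⟩ := Nat.exists_eq_succ_of_ne_zero hj
  have pascal : ((n + 1).choose (m + 1) : K) = n.choose m + n.choose (m + 1) := by
    exact_mod_cast Nat.choose_succ_succ n m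
  have absorb : ((n : K) + 1) * n.choose m = (n + 1).choose (m + 1) * ((m : K) + 1) := by
    exact_mod_cast Nat.add_one_mul_choose_eq n m
  push_cast
  field_simp
  linear_combination ((n : K) + 1) * pascal + absorb

namespace romanHarmonic

theorem zero_left (k : ℕ) : romanHarmonic 0 k = 0 := by
  simp [romanHarmonic]

theorem zero_right {n : ℕ} (hn : n ≠ 0) : romanHarmonic n 0 = 1 := by
  have alternating : ∑ j ∈ range (n + 1), (-1 : ℚ) ^ j * n.choose j = 0 := by
    exact_mod_cast Int.alternating_sum_range_choose_of_ne hn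
  rw [range_eq_Ico, sum_eq_sum_Ico_succ_bot (Nat.zero_lt_succ n), zero_add, Nat.succ_eq_add_one,
    Ico_add_one_right_eq_Icc] at alternating
  have flip_sign : ∀ j ∈ Icc 1 n, (-1 : ℚ) ^ (j - 1) * n.choose j = -((-1) ^ j * n.choose j) := by
    intro j hj
    obtain ⟨i, rfl⟩ := Nat.exists_eq_add_of_le (mem_Icc.mp hj).1
    simp [pow_add]
  simp only [romanHarmonic, pow_zero, div_one, sum_congr rfl flip_sign, sum_neg_distrib]
  simp only [pow_zero, Nat.choose_zero_right, Nat.cast_one, one_mul] at alternating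
  linarith

theorem succ_succ (n k : ℕ) :
    romanHarmonic (n + 1) (k + 1) = romanHarmonic n (k + 1) + romanHarmonic (n + 1) k / (n + 1) := by
  have split : ∀ j ∈ Icc 1 (n + 1),
      (-1 : ℚ) ^ (j - 1) * (n + 1).choose j / (j : ℚ) ^ (k + 1) =
        (-1) ^ (j - 1) * n.choose j / (j : ℚ) ^ (k + 1)
          + (-1) ^ (j - 1) * (n + 1).choose j / (j : ℚ) ^ k / (n + 1) := by
    intro j hj
    have hj0 : j ≠ 0 := Nat.one_le_iff_ne_zero.mp (mem_Icc.mp hj).1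
    calc (-1 : ℚ) ^ (j - 1) * (n + 1).choose j / (j : ℚ) ^ (k + 1)
        = (-1) ^ (j - 1) / (j : ℚ) ^ k * ((n + 1).choose j / j) := by ring
      _ = (-1) ^ (j - 1) / (j : ℚ) ^ k * (n.choose j / j + (n + 1).choose j / (n + 1)) := by
          rw [Nat.cast_choose_succ_div n hj0]
      _ = _ := by ring
  simp only [romanHarmonic]
  rw [sum_congr rfl split, sum_add_distrib, ← sum_div, sum_Icc_succ_top (by omega)]
  simp

theorem succ_right_eq_sum (n k : ℕ) :
    romanHarmonic n (k + 1) = ∑ m ∈ Icc 1 n, romanHarmonic m k / m := by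
  induction n with
  | zero => simp [zero_left]
  | succ n ih => rw [succ_succ, ih, sum_Icc_succ_top (by omega)]; push_cast; rfl

end romanHarmonic

theorem roman_harmonic_pos_le (n k : ℕ) (hn : 1 ≤ n) :
    0 < romanHarmonic n k ∧ romanHarmonic n k ≤ (n : ℚ) := by
  induction k generalizing n with
  | zero =>
    rw [romanHarmonic.zero_right (by omega)]
    exact ⟨one_pos, by exact_mod_cast hn⟩
  | succ k ih =>
    have summand_mem : ∀ m ∈ Icc 1 n, 0 < romanHarmonic m k / m ∧ romanHarmonic m k / m ≤ 1 := by
      intro m hm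
      obtain ⟨pos, le⟩ := ih m (mem_Icc.mp hm).1
      have hm0 : (0 : ℚ) < m := by exact_mod_cast (mem_Icc.mp hm).1
      exact ⟨div_pos pos hm0, (div_le_one hm0).mpr le⟩
    rw [romanHarmonic.succ_right_eq_sum]
    constructor
    · exact sum_pos (fun m hm => (summand_mem m hm).1) ⟨1, mem_Icc.mpr ⟨le_rfl, hn⟩⟩
    · calc ∑ m ∈ Icc 1 n, romanHarmonic m k / m ≤ (Icc 1 n).card • (1 : ℚ) :=
            sum_le_card_nsmul _ _ _ fun m hm => (summand_mem m hm).2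
        _ = n := by simp
end

section
/- For all n ≥ 2, c_n^{(2)} = (H_n^2 + H_n^{(2)})/2, where H_n = Σ_{j=1}^n 1/j and H_n^{(2)} = Σ_{j=1}^n 1/j^2. -/
/-!
Pascal's rule together with the absorption identity `(n + 1) C(n, j - 1) = j C(n + 1, j)` gives
the recursion `c_{n+1}^{(k+1)} = c_n^{(k+1)} + c_{n+1}^{(k)} / (n + 1)`. Since `c_n^{(0)} = 1` for
`n ≥ 1` (alternating binomial sum), it yields `c_n^{(1)} = H_n`, and then `c_n^{(2)}` grows by
`H_{n+1} / (n + 1)` at each step, which is exactly the increment of `(H_n^2 + H_n^{(2)}) / 2`.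
-/

open Finset

theorem romanHarmonic_zero_right {n : ℕ} (hn : n ≠ 0) : romanHarmonic n 0 = 1 := by
  have h : ∑ j ∈ range (n + 1), (-1 : ℚ) ^ j * n.choose j = 0 := by
    exact_mod_cast Int.alternating_sum_range_choose_of_ne hn
  rw [sum_range_succ'] at h
  simp only [pow_succ, mul_neg_one, neg_mul, sum_neg_distrib, pow_zero, Nat.choose_zero_right,
    Nat.cast_one, mul_one] at h
  rw [romanHarmonic, ← Ico_add_one_right_eq_Icc, sum_Ico_eq_sum_range, Nat.add_sub_cancel]
  simp only [Nat.add_sub_cancel, pow_zero, div_one, add_comm 1]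
  linarith

theorem romanHarmonic_one (n : ℕ) : romanHarmonic n 1 = ∑ j ∈ Icc 1 n, (1 : ℚ) / j := by
  induction n with
  | zero => simp [romanHarmonic]
  | succ n ih =>
    rw [romanHarmonic_succ_succ, ih, romanHarmonic_zero_right n.succ_ne_zero,
      sum_Icc_succ_top (by omega)]
    push_cast
    ring

theorem roman_harmonic_two_general (n : ℕ) :
    romanHarmonic n 2 =
      ((∑ j ∈ Finset.Icc 1 n, (1 : ℚ) / (j : ℚ)) ^ 2 +
        ∑ j ∈ Finset.Icc 1 n, (1 : ℚ) / (j : ℚ) ^ 2) / 2 := by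
  induction n with
  | zero => simp [romanHarmonic]
  | succ n ih =>
    rw [romanHarmonic_succ_succ, ih, romanHarmonic_one, sum_Icc_succ_top (by omega),
      sum_Icc_succ_top (by omega)]
    push_cast
    field_simp
    ring

theorem roman_harmonic_two (n : ℕ) (hn : 2 ≤ n) :
    romanHarmonic n 2 =
      ((∑ j ∈ Finset.Icc 1 n, (1 : ℚ) / (j : ℚ)) ^ 2 +
        ∑ j ∈ Finset.Icc 1 n, (1 : ℚ) / (j : ℚ) ^ 2) / 2 :=
  roman_harmonic_two_general n
end
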